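/- arXiv:2205.06452 — 3 statements merged into one kernel-verified Lean document; each statement's English description precedes it below -/
import Mathlib

section
/- Knowledge gain theorem: let C and D be chromatic simplicial complexes inducing simplicial models ⟨F(C), ∼, L⟩ and ⟨F(D), ∼', L'⟩, and let δ be a morphism from C to D. Then for every facet X ∈ F(C) and every closed (positive) formula φ of the epistemic μ-calculus, D, δ(X) ⊨ φ implies C, X ⊨ φ. -/
/-! ## Epistemic μ-calculus: syntax and Kripke semantics -/

/-- Positive formulas of the epistemic μ-calculus: atoms, negated atoms,
propositional variables (indexed by `ℕ`), disjunction, conjunction,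
distributed knowledge `D_A`, and greatest fixpoints `νZ.φ`. -/
inductive Formula (AP Agent : Type) : Type
  | atom  : AP → Formula AP Agent
  | natom : AP → Formula AP Agent
  | var   : ℕ → Formula AP Agent
  | or    : Formula AP Agent → Formula AP Agent → Formula AP Agent
  | and   : Formula AP Agent → Formula AP Agent → Formula AP Agent
  | know  : Set Agent → Formula AP Agent → Formula AP Agent
  | nu    : ℕ → Formula AP Agent → Formula AP Agent

/-- A Kripke model: indistinguishability relations and a labeling. -/
structure KModel (Agent AP S : Type) where
  rel : Agent → S → S → Prop
  label : S → Set AP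

/-- Derived relation `≈_A`. -/
def KModel.relD {Agent AP S : Type} (M : KModel Agent AP S) (A : Set Agent) (X Y : S) : Prop :=
  ∀ a ∈ A, M.rel a X Y

/-- The semantics `⟦φ⟧^M_ρ`. -/
def sem {Agent AP S : Type} (M : KModel Agent AP S) (ρ : ℕ → Set S) :
    Formula AP Agent → Set S
  | .atom p   => {X | p ∈ M.label X}
  | .natom p  => {X | p ∉ M.label X}
  | .var Z    => ρ Z
  | .or φ ψ   => sem M ρ φ ∪ sem M ρ ψ
  | .and φ ψ  => sem M ρ φ ∩ sem M ρ ψ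
  | .know A φ => {X | ∀ Y, M.relD A Y X → Y ∈ sem M ρ φ}
  | .nu Z φ   => ⋃₀ {T | T ⊆ sem M (Function.update ρ Z T) φ}

/-- Free propositional variables of a formula. -/
def Formula.freeVars {AP Agent : Type} : Formula AP Agent → Set ℕ
  | .atom _   => ∅
  | .natom _  => ∅
  | .var Z    => {Z}
  | .or φ ψ   => φ.freeVars ∪ ψ.freeVars
  | .and φ ψ  => φ.freeVars ∪ ψ.freeVars
  | .know _ φ => φ.freeVars
  | .nu Z φ   => φ.freeVars \ {Z}

/-- All propositional variables occurring in a formula (free or bound). -/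
def Formula.vars {AP Agent : Type} : Formula AP Agent → Set ℕ
  | .atom _   => ∅
  | .natom _  => ∅
  | .var Z    => {Z}
  | .or φ ψ   => φ.vars ∪ ψ.vars
  | .and φ ψ  => φ.vars ∪ ψ.vars
  | .know _ φ => φ.vars
  | .nu Z φ   => insert Z φ.vars

/-- Satisfaction of a closed formula (under every interpretation). -/
def Models {Agent AP S : Type} (M : KModel Agent AP S) (X : S) (φ : Formula AP Agent) : Prop :=
  ∀ ρ, X ∈ sem M ρ φ

/-- Validity of a closed formula in a model. -/
def ValidIn {Agent AP S : Type} (M : KModel Agent AP S) (φ : Formula AP Agent) : Prop :=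
  ∀ X, Models M X φ

/-! ## Chromatic simplicial complexes and their induced simplicial models -/

/-- Vertices are pairs `(a, v)` of an agent (color) and a value. -/
abbrev Vtx (n : ℕ) := Fin (n + 1) × Fin (n + 1)

/-- A pure chromatic simplicial complex on agents/values `Fin (n+1)`:
a finite, downward-closed collection of simplexes (finite sets of vertices
with pairwise distinct colors), in which every maximal simplex (facet) is
colored by all of `Π = Fin (n+1)`. -/
structure ChromComplex (n : ℕ) where
  simplexes : Set (Finset (Vtx n))
  finite : simplexes.Finite
  downClosed : ∀ s ∈ simplexes, ∀ t, t ⊆ s → t ∈ simplexes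
  chromatic : ∀ s ∈ simplexes, Set.InjOn Prod.fst (s : Set (Vtx n))
  pure : ∀ s ∈ simplexes, (∀ t ∈ simplexes, s ⊆ t → t = s) →
    s.image Prod.fst = Finset.univ

/-- A facet: a maximal simplex. -/
def ChromComplex.IsFacet {n : ℕ} (C : ChromComplex n) (s : Finset (Vtx n)) : Prop :=
  s ∈ C.simplexes ∧ ∀ t ∈ C.simplexes, s ⊆ t → t = s

/-- The type of facets `F(C)`. -/
def ChromComplex.Facet {n : ℕ} (C : ChromComplex n) := {s : Finset (Vtx n) // C.IsFacet s}

/-- The simplicial model induced by a complex: states are facets,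
`X ∼_a Y` iff `X` and `Y` share a vertex of color `a`, and the label of a
facet `X` is `{input_{a,v} | (a,v) ∈ X}` (an atomic proposition `input_{a,v}`
is identified with the pair `(a,v)`). -/
def inducedModel {n : ℕ} (C : ChromComplex n) : KModel (Fin (n + 1)) (Vtx n) C.Facet where
  rel a X Y := ∃ v : Vtx n, v ∈ X.val ∧ v ∈ Y.val ∧ v.1 = a
  label X := ↑X.val

/-- A morphism of simplicial models induced by complexes: a color-preserving
vertex map sending simplexes to simplexes that preserves the labeling of
facets (for the input labelings this means `δ(X) = X` as vertex sets). -/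
structure CMorphism {n : ℕ} (C D : ChromComplex n) where
  vmap : Vtx n → Vtx n
  color : ∀ v, (vmap v).1 = v.1
  map_simplex : ∀ s ∈ C.simplexes, s.image vmap ∈ D.simplexes
  label_eq : ∀ s : Finset (Vtx n), C.IsFacet s → s.image vmap = s

/-- The image of a facet under a morphism is a facet. -/
theorem CMorphism.facet_image {n : ℕ} {C D : ChromComplex n} (δ : CMorphism C D)
    (X : Finset (Vtx n)) (hX : C.IsFacet X) : D.IsFacet (X.image δ.vmap) := by
  constructor
  · exact δ.map_simplex X hX.1
  · intro t ht hsub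
    have hfull : (X.image δ.vmap).image Prod.fst = Finset.univ := by
      rw [Finset.image_image]
      have : X.image (Prod.fst ∘ δ.vmap) = X.image Prod.fst :=
        Finset.image_congr (fun v _ => δ.color v)
      rw [this]
      exact C.pure X hX.1 hX.2
    have hts : t ⊆ X.image δ.vmap := by
      intro w hw
      have : w.1 ∈ (X.image δ.vmap).image Prod.fst := by
        rw [hfull]; exact Finset.mem_univ _
      rcases Finset.mem_image.mp this with ⟨u, hu, huw⟩
      have : u = w := D.chromatic t ht (hsub hu) hw huw
      exact this ▸ hu
    exact Finset.Subset.antisymm hts hsub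

theorem sem_pullback {Agent AP S S' : Type} (M : KModel Agent AP S) (N : KModel Agent AP S')
    (f : S → S')
    (hlabel : ∀ X, N.label (f X) = M.label X)
    (hrel : ∀ a X Y, M.rel a X Y → N.rel a (f X) (f Y)) :
    ∀ (φ : Formula AP Agent) (ρM : ℕ → Set S) (ρN : ℕ → Set S'),
      (∀ Z X, f X ∈ ρN Z → X ∈ ρM Z) →
      ∀ X, f X ∈ sem N ρN φ → X ∈ sem M ρM φ := by
  intro φ
  induction φ with
  | atom p =>
    intro ρM ρN h X hX
    simpa [sem, hlabel X] using hX
  | natom p =>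
    intro ρM ρN h X hX
    simpa [sem, hlabel X] using hX
  | var Z =>
    intro ρM ρN h X hX
    exact h Z X hX
  | or φ ψ ihφ ihψ =>
    intro ρM ρN h X hX
    rcases hX with h1 | h1
    · exact Or.inl (ihφ ρM ρN h X h1)
    · exact Or.inr (ihψ ρM ρN h X h1)
  | and φ ψ ihφ ihψ =>
    intro ρM ρN h X hX
    exact ⟨ihφ ρM ρN h X hX.1, ihψ ρM ρN h X hX.2⟩
  | know A φ ih =>
    intro ρM ρN h X hX
    intro Y hYX
    refine ih ρM ρN h Y (hX (f Y) ?_)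
    intro a ha
    exact hrel a Y X (hYX a ha)
  | nu Z φ ih =>
    intro ρM ρN h X hX
    rcases hX with ⟨T, hT, hfXT⟩
    refine ⟨{X' | f X' ∈ T}, ?_, hfXT⟩
    intro X' hX'
    refine ih (Function.update ρM Z {X' | f X' ∈ T}) (Function.update ρN Z T) ?_ X' (hT hX')
    intro W Y hY
    by_cases hw : W = Z
    · subst hw
      simpa [Function.update_self] using
        (by simpa [Function.update_self] using hY : f Y ∈ T)
    · rw [Function.update_of_ne hw] at hY ⊢
      exact h W Y hY

/-- **Knowledge gain.** If `δ` is a morphism of simplicial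
models from `C` to `D`, then for every facet `X` of `C` and closed positive
formula `φ`, `D, δ(X) ⊨ φ` implies `C, X ⊨ φ`. -/
theorem knowledge_gain {n : ℕ} (C D : ChromComplex n) (δ : CMorphism C D)
    (X : C.Facet) (φ : Formula (Vtx n) (Fin (n + 1))) (hclosed : φ.freeVars = ∅) :
    Models (inducedModel D) ⟨X.val.image δ.vmap, δ.facet_image X.val X.property⟩ φ →
    Models (inducedModel C) X φ := by
  intro hD ρ
  set f : C.Facet → D.Facet :=
    fun Y => ⟨Y.val.image δ.vmap, δ.facet_image Y.val Y.property⟩ with hf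
  have hlabel : ∀ Y : C.Facet, (inducedModel D).label (f Y) = (inducedModel C).label Y := by
    intro Y
    simp only [inducedModel, hf, δ.label_eq Y.val Y.property]
  have hrel : ∀ a (Y Y' : C.Facet), (inducedModel C).rel a Y Y' →
      (inducedModel D).rel a (f Y) (f Y') := by
    intro a Y Y' ⟨v, hv1, hv2, hv3⟩
    refine ⟨v, ?_, ?_, hv3⟩ <;>
      simp only [hf, δ.label_eq Y.val Y.property, δ.label_eq Y'.val Y'.property, hv1, hv2]
  exact sem_pullback (inducedModel C) (inducedModel D) f hlabel hrel φ ρ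
    (fun Z => {Y | ∀ X', f X' = Y → X' ∈ ρ Z})
    (fun Z X' hX' => hX' X' rfl) X (hD _)
end

section
/- Knowledge gain with factual change (Theorem 2, for the iterated immediate snapshot protocol and the k-set agreement task): let 1 ≤ k ≤ n, m ≥ 1, and let δ be a morphism from I[IS^m] to I[SA_k]. Then for every facet σ of I[IS^m] and every closed (positive) formula φ of the epistemic μ-calculus over the atomic propositions AP^fc, I[SA_k]^fc, δ(σ) ⊨ φ implies I[IS^m]^{fc,δ}, σ ⊨ φ. -/
/-! ## Simplicial models presented by facet data -/

/-- A (pure chromatic) simplicial model presented by its facets: each state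
(facet) `σ` has, for every color `a ∈ Π`, a unique vertex `(a, vert σ a)` with
value in `V`; `label` gives the atomic propositions true at each facet. -/
structure SModel (n : ℕ) (V AP S : Type) where
  vert : S → Fin (n + 1) → V
  label : S → Set AP

/-- The induced Kripke model: `σ ∼_a τ` iff `σ` and `τ` share their vertex of
color `a` (i.e. `a ∈ χ(σ ∩ τ)`). -/
def SModel.toKModel {n : ℕ} {V AP S : Type} (M : SModel n V AP S) :
    KModel (Fin (n + 1)) AP S where
  rel a σ τ := M.vert σ a = M.vert τ a
  label := M.label

/-- Satisfaction of a closed formula at a state of a simplicial model. -/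
def ModelsS {n : ℕ} {V AP S : Type} (M : SModel n V AP S) (σ : S)
    (φ : Formula AP (Fin (n + 1))) : Prop :=
  ∀ ρ, σ ∈ sem M.toKModel ρ φ

/-- Validity of a closed formula in a simplicial model. -/
def ValidInS {n : ℕ} {V AP S : Type} (M : SModel n V AP S)
    (φ : Formula AP (Fin (n + 1))) : Prop :=
  ∀ σ, ModelsS M σ φ

/-- A morphism of simplicial models: a color-preserving vertex map `vmap`
sending every simplex of the source to a simplex of the target (hence every
facet `σ` to the facet `smap σ`), preserving the labeling. -/
structure SMorphism {n : ℕ} {V V' AP S S' : Type}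
    (M : SModel n V AP S) (M' : SModel n V' AP S') where
  vmap : Fin (n + 1) × V → Fin (n + 1) × V'
  color : ∀ p, (vmap p).1 = p.1
  smap : S → S'
  vert_comm : ∀ σ a, vmap (a, M.vert σ a) = (a, M'.vert (smap σ) a)
  label_eq : ∀ σ, M.label σ = M'.label (smap σ)

/-! ## Ordered set partitions, iterated immediate snapshot views, and the
product update models `I[IS^m]` and `I[SA_k]` -/

/-- An ordered set partition `⟨A₁|A₂|…|A_r⟩` of `Π = Fin (n+1)`. -/
structure OSP (n : ℕ) where
  parts : List (Finset (Fin (n + 1)))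
  nonempty : ∀ A ∈ parts, A.Nonempty
  pairwise_disjoint : parts.Pairwise Disjoint
  cover : ∀ a : Fin (n + 1), ∃ A ∈ parts, a ∈ A

/-- `view*_a(γ) = A₁ ∪ … ∪ A_q` where `a ∈ A_q`: the set of processes seen by
`a` in the snapshot round `γ`. -/
def OSP.viewSet {n : ℕ} (γ : OSP n) (a : Fin (n + 1)) : Finset (Fin (n + 1)) :=
  (γ.parts.take (γ.parts.findIdx (fun A => decide (a ∈ A)) + 1)).foldr (· ∪ ·) ∅

/-- Iterated snapshot views: `base v` is an initial input value, and `snap f`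
is the view of a process after a snapshot round, recording (for exactly the
processes it has seen) their views at the previous round. -/
inductive View (n : ℕ) : Type
  | base : Fin (n + 1) → View n
  | snap : (Fin (n + 1) → Option (View n)) → View n

/-- `iisView X m γ a` is `view_a(X·γ₁·…·γ_m)`, the view of process `a` in the
facet `X·γ₁·…·γ_m` of the `m`-iterated standard chromatic subdivision of the
input facet `X` (where `γ i` is the `(i+1)`-st round's ordered set partition). -/
def iisView {n : ℕ} (X : Fin (n + 1) → Fin (n + 1)) :
    (m : ℕ) → (Fin m → OSP n) → Fin (n + 1) → View n
  | 0, _, a => .base (X a)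
  | m + 1, γ, a => .snap (fun b =>
      if b ∈ (γ (Fin.last m)).viewSet a then
        some (iisView X m (fun i => γ i.castSucc) b)
      else none)

/-- Facets of `I[IS^m]`: an input facet `X ∈ F(I)` (given by the input values
of the `n+1` processes) together with the `m` rounds' ordered set partitions. -/
def IISState (n m : ℕ) : Type := (Fin (n + 1) → Fin (n + 1)) × (Fin m → OSP n)

/-- Atomic propositions with factual change: `Sum.inl (a,v)` is `input_{a,v}`
and `Sum.inr (a,d)` is `decide_{a,d}`. -/
abbrev APfc (n : ℕ) := (Fin (n + 1) × Fin (n + 1)) ⊕ (Fin (n + 1) × Fin (n + 1))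

/-- The product update model `I[IS^m]` of the `m`-round iterated immediate
snapshot protocol (labels mention only inputs). -/
def IISmodel (n m : ℕ) : SModel n (View n) (APfc n) (IISState n m) where
  vert σ a := iisView σ.1 m σ.2 a
  label σ := {p | ∃ a, p = Sum.inl (a, σ.1 a)}

/-- Facets of `I[SA_k]`: a pair of an input assignment and an output
assignment of the `n+1` processes, such that at most `k` values are decided
and every decided value is some process's input. -/
def SAState (n k : ℕ) : Type :=
  {p : (Fin (n + 1) → Fin (n + 1)) × (Fin (n + 1) → Fin (n + 1)) //
    (Finset.univ.image p.2).card ≤ k ∧ Finset.univ.image p.2 ⊆ Finset.univ.image p.1}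

/-- The product update model `I[SA_k]` of the `k`-set agreement task
(labels mention only inputs). -/
def SAmodel (n k : ℕ) : SModel n (Fin (n + 1) × Fin (n + 1)) (APfc n) (SAState n k) where
  vert σ a := (σ.val.1 a, σ.val.2 a)
  label σ := {p | ∃ a, p = Sum.inl (a, σ.val.1 a)}

/-- The factual-change extension `I[SA_k]^fc`: same Kripke frame, labels also
mention the decided values. -/
def SAfc (n k : ℕ) : SModel n (Fin (n + 1) × Fin (n + 1)) (APfc n) (SAState n k) where
  vert σ a := (σ.val.1 a, σ.val.2 a)
  label σ := {p | (∃ a, p = Sum.inl (a, σ.val.1 a)) ∨ ∃ a, p = Sum.inr (a, σ.val.2 a)}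

/-- The factual-change model `I[IS^m]^{fc,δ}` for a morphism
`δ : I[IS^m] → I[SA_k]`: the Kripke frame of `I[IS^m]` with labels pulled
back from `I[SA_k]^fc` along `δ`. -/
def IISfc (n m k : ℕ) (δ : SMorphism (IISmodel n m) (SAmodel n k)) :
    SModel n (View n) (APfc n) (IISState n m) where
  vert σ a := iisView σ.1 m σ.2 a
  label σ := (SAfc n k).label (δ.smap σ)

/-! ## The concrete specification formulas -/

/-- Finite conjunction of a list of formulas (the empty conjunction is the
valid formula `νZ.Z`; all conjunctions used below are over nonempty lists). -/
def conjF {AP Agent : Type} : List (Formula AP Agent) → Formula AP Agent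
  | [] => .nu 0 (.var 0)
  | [φ] => φ
  | φ :: l => .and φ (conjF l)

/-- Finite disjunction of a list of formulas (all disjunctions used below are
over nonempty lists). -/
def disjF {AP Agent : Type} : List (Formula AP Agent) → Formula AP Agent
  | [] => .nu 0 (.var 0)
  | [φ] => φ
  | φ :: l => .or φ (disjF l)

/-- The list of all agents `0,…,n`. -/
def allAgents (n : ℕ) : List (Fin (n + 1)) := List.finRange (n + 1)

/-- All pairs of agents. -/
def agentPairs (n : ℕ) : List (Fin (n + 1) × Fin (n + 1)) :=
  (allAgents n).flatMap (fun i => (allAgents n).map (fun j => (i, j)))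

/-- The list of all nonempty subsets of `Π`. -/
noncomputable def neSubsets (n : ℕ) : List (Finset (Fin (n + 1))) :=
  ((Finset.univ : Finset (Fin (n + 1))).powerset.filter (fun A => A.Nonempty)).toList

/-- `IFUN`: each process has exactly one input value
(`¬(p ∧ q)` is written positively as `¬p ∨ ¬q`). -/
def IFUN (n : ℕ) : Formula (APfc n) (Fin (n + 1)) :=
  conjF ((allAgents n).map (fun a => .and
    (conjF (((agentPairs n).filter (fun p => decide (p.1 ≠ p.2))).map
      (fun p => .or (.natom (Sum.inl (a, p.1))) (.natom (Sum.inl (a, p.2))))))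
    (disjF ((allAgents n).map (fun i => .atom (Sum.inl (a, i)))))))

/-- `OFUN`: each process decides exactly one output value. -/
def OFUN (n : ℕ) : Formula (APfc n) (Fin (n + 1)) :=
  conjF ((allAgents n).map (fun a => .and
    (conjF (((agentPairs n).filter (fun p => decide (p.1 ≠ p.2))).map
      (fun p => .or (.natom (Sum.inr (a, p.1))) (.natom (Sum.inr (a, p.2))))))
    (disjF ((allAgents n).map (fun d => .atom (Sum.inr (a, d)))))))

/-- `VALID`: every decided value is some process's input. -/
def VALIDf (n : ℕ) : Formula (APfc n) (Fin (n + 1)) :=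
  conjF ((allAgents n).map (fun a =>
    conjF ((allAgents n).map (fun d =>
      .or (.natom (Sum.inr (a, d)))
          (disjF ((allAgents n).map (fun b => .atom (Sum.inl (b, d)))))))))

/-- `AGREE_k`: at most `k` different values are decided. -/
noncomputable def AGREEf (n k : ℕ) : Formula (APfc n) (Fin (n + 1)) :=
  disjF ((((Finset.univ : Finset (Fin (n + 1))).powerset.filter
      (fun A => 0 < A.card ∧ A.card ≤ k)).toList).map (fun A =>
    conjF ((allAgents n).map (fun a =>
      disjF (A.toList.map (fun d => .atom (Sum.inr (a, d))))))))

/-- `KNOW`: a decided value is distributed knowledge in any group containing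
the decider. -/
noncomputable def KNOWf (n : ℕ) : Formula (APfc n) (Fin (n + 1)) :=
  conjF ((neSubsets n).map (fun A =>
    conjF (A.toList.map (fun a =>
      conjF ((allAgents n).map (fun d =>
        .or (.natom (Sum.inr (a, d)))
            (.know (↑A) (.atom (Sum.inr (a, d))))))))))

/-- `DEC_A = ⋀_{d=0}^{|A|−1} ⋁_{a∈A} decide_{a,d}`. -/
noncomputable def DECf (n : ℕ) (A : Finset (Fin (n + 1))) :
    Formula (APfc n) (Fin (n + 1)) :=
  conjF ((List.range A.card).map (fun d =>
    disjF (A.toList.map (fun a => .atom (Sum.inr (a, (Fin.ofNat (n + 1) d)))))))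

/-- `¬DEC_A` in positive (de Morgan) form. -/
noncomputable def NDECf (n : ℕ) (A : Finset (Fin (n + 1))) :
    Formula (APfc n) (Fin (n + 1)) :=
  disjF ((List.range A.card).map (fun d =>
    conjF (A.toList.map (fun a => .natom (Sum.inr (a, (Fin.ofNat (n + 1) d)))))))

/-- The unsolvability formula
`Φ_k = νZ.[OFUN ∧ VALID ∧ ⋀_{∅≠A⊆Π}(DEC_A ⇒ D_A(KNOW ∧ AGREE_k ∧ Z))]`. -/
noncomputable def Phi (n k : ℕ) : Formula (APfc n) (Fin (n + 1)) :=
  .nu 0 (.and (OFUN n) (.and (VALIDf n)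
    (conjF ((neSubsets n).map (fun A =>
      .or (NDECf n A)
          (.know (↑A) (.and (KNOWf n) (.and (AGREEf n k) (.var 0)))))))))

/-! ## Restricted-form ordered set partitions and the flip operation -/

/-- The trailing singleton parts `⟨d+1|d+2|…|n⟩`. -/
def trailing (n d : ℕ) : List (Finset (Fin (n + 1))) :=
  ((List.finRange (n + 1)).filter (fun i : Fin (n + 1) => decide (d < (i : ℕ)))).map (fun i => {i})

/-- `γ` has the restricted form `⟨A₁|…|A_r|d+1|…|n⟩`, with prefix `l = [A₁,…,A_r]`
an ordered set partition of `[0,d]` followed by the singletons `d+1,…,n`. -/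
def RestForm (n d : ℕ) (γ : OSP n) (l : List (Finset (Fin (n + 1)))) : Prop :=
  γ.parts = l ++ trailing n d ∧ ∀ A ∈ l, ∀ a ∈ A, (a : ℕ) ≤ d

/-- `flip_A` on the prefix `[A₁,…,A_r]`, for `A = [0,d] ∖ {b}`:
moves `b` one position later in the ordered set partition. -/
def flipB {n : ℕ} (b : Fin (n + 1)) :
    List (Finset (Fin (n + 1))) → List (Finset (Fin (n + 1)))
  | [] => []
  | A :: rest =>
    if b ∈ A then
      if 1 < A.card then A.erase b :: {b} :: rest
      else
        match rest with
        | [] => [A]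
        | B :: rest' => insert b B :: rest'
    else A :: flipB b rest

/-! ## The input facets `I_d`, the collections `F_d`, and the relation `R^A` -/

/-- The input facet `I_d = {(i,i) | i ≤ d} ∪ {(i,d) | d < i}` (as an input
assignment). -/
def Idf (n d : ℕ) : Fin (n + 1) → Fin (n + 1) :=
  fun i => if (i : ℕ) ≤ d then i else (Fin.ofNat (n + 1) d)

/-- The collection `F_d ⊆ F(I[IS^m])`: facets `I_d·γ₁·…·γ_m` where every `γ_i`
has the restricted form `⟨A_{i,1}|…|A_{i,r_i}|d+1|…|n⟩`. -/
def Fset (n m d : ℕ) : Set (IISState n m) :=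
  {σ | σ.1 = Idf n d ∧ ∀ i, ∃ l, RestForm n d (σ.2 i) l}

/-- The singletons-in-increasing-order partition `⟨0|1|…|n⟩`. -/
def gbar (n : ℕ) : OSP n where
  parts := (List.finRange (n + 1)).map (fun i => {i})
  nonempty := by
    intro A hA
    rcases List.mem_map.mp hA with ⟨i, _, rfl⟩
    exact Finset.singleton_nonempty i
  pairwise_disjoint := by
    rw [List.pairwise_map]
    exact (List.nodup_finRange (n + 1)).imp
      (fun h => Finset.disjoint_singleton.mpr h)
  cover := by
    intro a
    exact ⟨{a}, List.mem_map.mpr ⟨a, List.mem_finRange a, rfl⟩, Finset.mem_singleton_self a⟩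

/-- The relation `R^A` on `⋃_{d=0}^k F_d` (for a morphism
`δ : I[IS^m] → I[SA_k]`): `σ R^A σ'` iff `σ ≈_A σ'`, `σ ≠ σ'`, `A ⊆ [0,|A|]`,
`σ ∈ F_d`, `σ' ∈ F_e` with `d,e ≤ k`, `max d e = |A|`, `|d − e| ≤ 1`, and both
`σ` and `σ'` satisfy `DEC_A` in `I[IS^m]^{fc,δ}`. -/
noncomputable def Rrel (n m k : ℕ) (δ : SMorphism (IISmodel n m) (SAmodel n k))
    (A : Finset (Fin (n + 1))) (σ σ' : IISState n m) : Prop :=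
  (IISmodel n m).toKModel.relD (↑A) σ σ' ∧ σ ≠ σ' ∧
  (∀ a ∈ A, (a : ℕ) ≤ A.card) ∧
  (∃ d e : ℕ, d ≤ k ∧ e ≤ k ∧ σ ∈ Fset n m d ∧ σ' ∈ Fset n m e ∧
    max d e = A.card ∧ d ≤ e + 1 ∧ e ≤ d + 1) ∧
  ModelsS (IISfc n m k δ) σ (DECf n A) ∧ ModelsS (IISfc n m k δ) σ' (DECf n A)

/-! ## Carrier sets, contention sets, and the k-concurrency model -/

/-- `carrier_a(X·γ₁·γ₂) = ⋃_{b ∈ view*_a(γ₂)} view*_b(γ₁)`. -/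
def carrierSet (n : ℕ) (σ : IISState n 2) (a : Fin (n + 1)) : Finset (Fin (n + 1)) :=
  ((σ.2 1).viewSet a).biUnion (σ.2 0).viewSet

/-- The contention sets of a facet of `I[IS^2]`. -/
def ContSets (n : ℕ) (σ : IISState n 2) : Set (Finset (Fin (n + 1))) :=
  {A | ∀ a ∈ A, carrierSet n σ a = A.biUnion (carrierSet n σ)}

/-- The facets of the `k`-concurrency model `R_k`. -/
def kConcStates (n k : ℕ) : Set (IISState n 2) :=
  {σ | ∀ A ∈ ContSets n σ, A.card ≤ k}

/-- The `k`-concurrency model `R_k`, the simplicial submodel of `I[IS^2]` on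
the facets in `kConcStates`. -/
def RModel (n k : ℕ) : SModel n (View n) (APfc n) {σ : IISState n 2 // σ ∈ kConcStates n k} where
  vert σ a := iisView σ.val.1 2 σ.val.2 a
  label σ := {p | ∃ a, p = Sum.inl (a, σ.val.1 a)}

/-- Key lemma: positive formulas are pulled back along the morphism `δ`. -/
theorem knowledge_gain_aux {n k m : ℕ}
    (δ : SMorphism (IISmodel n m) (SAmodel n k))
    (φ : Formula (APfc n) (Fin (n + 1))) :
    ∀ (ρ : ℕ → Set (IISState n m)) (ρ' : ℕ → Set (SAState n k)),
      (∀ Z x, δ.smap x ∈ ρ' Z → x ∈ ρ Z) →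
      ∀ x, δ.smap x ∈ sem (SAfc n k).toKModel ρ' φ →
        x ∈ sem (IISfc n m k δ).toKModel ρ φ := by
  induction φ with
  | atom p =>
    intro ρ ρ' hρ x hx
    exact hx
  | natom p =>
    intro ρ ρ' hρ x hx
    exact hx
  | var Z =>
    intro ρ ρ' hρ x hx
    exact hρ Z x hx
  | or φ ψ ihφ ihψ =>
    intro ρ ρ' hρ x hx
    rcases hx with h | h
    · exact Or.inl (ihφ ρ ρ' hρ x h)
    · exact Or.inr (ihψ ρ ρ' hρ x h)
  | and φ ψ ihφ ihψ =>
    intro ρ ρ' hρ x hx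
    exact ⟨ihφ ρ ρ' hρ x hx.1, ihψ ρ ρ' hρ x hx.2⟩
  | know A φ ih =>
    intro ρ ρ' hρ x hx Y hY
    apply ih ρ ρ' hρ Y
    apply hx
    intro a ha
    have h3 : (IISmodel n m).vert Y a = (IISmodel n m).vert x a := hY a ha
    have h1 := δ.vert_comm Y a
    have h2 := δ.vert_comm x a
    rw [h3, h2] at h1
    have : (SAmodel n k).vert (δ.smap Y) a = (SAmodel n k).vert (δ.smap x) a :=
      (Prod.mk.injEq _ _ _ _ ▸ h1.symm).2
    exact this
  | nu Z φ ih =>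
    intro ρ ρ' hρ x hx
    obtain ⟨T, hT, hxT⟩ := hx
    refine ⟨δ.smap ⁻¹' T, ?_, hxT⟩
    intro y hy
    apply ih (Function.update ρ Z (δ.smap ⁻¹' T)) (Function.update ρ' Z T) ?_ y (hT hy)
    intro W w hw
    by_cases hWZ : W = Z
    · subst hWZ
      simp only [Function.update_self] at hw ⊢
      exact hw
    · rw [Function.update_of_ne hWZ] at hw ⊢
      exact hρ W w hw

/-- **Knowledge gain with factual change.** -/
theorem knowledge_gain_factual_change (n k m : ℕ) (hn : 1 ≤ n)
    (hk1 : 1 ≤ k) (hkn : k ≤ n) (hm : 1 ≤ m)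
    (δ : SMorphism (IISmodel n m) (SAmodel n k))
    (σ : IISState n m)
    (φ : Formula (APfc n) (Fin (n + 1))) (hclosed : φ.freeVars = ∅) :
    ModelsS (SAfc n k) (δ.smap σ) φ → ModelsS (IISfc n m k δ) σ φ := by
  intro h ρ
  exact knowledge_gain_aux δ φ ρ (fun _ => ∅) (fun _ _ hx => absurd hx (Set.notMem_empty _))
    σ (h (fun _ => ∅))
end

section
/- Ever-lasting path lemma: let S be a set, R an irreflexive symmetric binary relation on S, P a predicate on S, and v₀ ∈ S, such that: (i) P(v₀) holds; (ii) v₀ has exactly one R-neighbor; (iii) every v ∈ S with v ≠ v₀ and P(v) has either exactly 0 or exactly 2 R-neighbors; and (iv) P(u) and u R v together imply P(v). Then for every ℓ ≥ 1 there exist pairwise distinct elements v₀, v₁, …, v_ℓ of S with v_i R v_{i+1} for all 0 ≤ i < ℓ. In particular, S is infinite. -/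
/-- **Ever-lasting path lemma.** Let `R` be an irreflexive
symmetric relation on `S`, `P` a predicate, and `v₀ ∈ S` such that: `P v₀`
holds; `v₀` has exactly one `R`-neighbor; every `v ≠ v₀` with `P v` has
exactly 0 or exactly 2 `R`-neighbors; and `P` is preserved along `R`. Then for
every `ℓ ≥ 1` there is an injective path `v₀ = f 0, f 1, …, f ℓ` with
consecutive elements `R`-related; in particular `S` is infinite. -/
theorem everlasting_path {S : Type*} (R : S → S → Prop)
    (hirr : ∀ v, ¬ R v v) (hsymm : ∀ u v, R u v → R v u)
    (P : S → Prop) (v₀ : S)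
    (hP0 : P v₀)
    (hdeg0 : ∃ u : S, {w : S | R w v₀} = {u})
    (hdeg : ∀ v : S, v ≠ v₀ → P v →
      ({w : S | R w v} = ∅ ∨ ∃ a b : S, a ≠ b ∧ {w : S | R w v} = {a, b}))
    (hpres : ∀ u v : S, P u → R u v → P v) :
    (∀ ℓ : ℕ, 1 ≤ ℓ →
      ∃ f : Fin (ℓ + 1) → S, Function.Injective f ∧ f 0 = v₀ ∧
        ∀ i : Fin ℓ, R (f i.castSucc) (f i.succ)) ∧
    Infinite S := by
  classical
  obtain ⟨u, hu⟩ := hdeg0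
  have hRuv : R u v₀ := by
    have := Set.ext_iff.mp hu u
    simp at this; exact this
  set nxt : S → S → S := fun p c =>
    if h : ∃ x, R x c ∧ x ≠ p then h.choose else p with hnxt
  have hnxt_spec : ∀ p c, (∃ x, R x c ∧ x ≠ p) →
      R (nxt p c) c ∧ nxt p c ≠ p := by
    intro p c hx
    simp only [hnxt, dif_pos hx]
    exact hx.choose_spec
  set h : ℕ → S × S := fun n =>
    Nat.rec (v₀, u) (fun _ pr => (pr.2, nxt pr.1 pr.2)) n with hh
  set g : ℕ → S := fun n => (h n).1 with hg
  have hg0 : g 0 = v₀ := rfl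
  have hg1 : g 1 = u := rfl
  have hgstep : ∀ n, g (n + 2) = nxt (g n) (g (n + 1)) := fun n => rfl
  -- pair lemma
  have pair_lem : ∀ (a b x y : S), x ≠ y → x ∈ ({a, b} : Set S) →
      y ∈ ({a, b} : Set S) → ({a, b} : Set S) = {x, y} := by
    intro a b x y hxy hx hy
    rcases hx with rfl | rfl <;> rcases hy with rfl | rfl <;>
      simp_all [Set.pair_comm]
  -- main invariant
  have key : ∀ n,
      (∀ i j, i ≤ n → j ≤ n → g i = g j → i = j) ∧
      (∀ i, i < n → R (g i) (g (i + 1))) ∧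
      (∀ i, i + 1 < n → {w : S | R w (g (i + 1))} = {g i, g (i + 2)} ∧
        g i ≠ g (i + 2)) := by
    intro n
    induction n with
    | zero =>
      exact ⟨fun i j hi hj _ => by omega, fun i hi => absurd hi (by omega),
        fun i hi => absurd hi (by omega)⟩
    | succ m ih =>
      obtain ⟨hinj, hadj, hnbr⟩ := ih
      rcases Nat.eq_zero_or_pos m with rfl | hm
      · have hne01 : g 0 ≠ g 1 := by
          rw [hg0, hg1]; intro hEq; exact hirr u (hEq ▸ hRuv)
        refine ⟨?_, ?_, ?_⟩
        · intro i j hi hj hgij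
          interval_cases i <;> interval_cases j
          · rfl
          · exact absurd hgij hne01
          · exact absurd hgij.symm hne01
          · rfl
        · intro i hi
          interval_cases i
          exact hsymm _ _ (hg0 ▸ hg1 ▸ hRuv)
        · intro i hi; omega
      · -- m ≥ 1; k = m, we add g (m+1)
        -- P (g i) for i ≤ m
        have hPg : ∀ i, i ≤ m → P (g i) := by
          intro i hi
          induction i with
          | zero => exact hg0 ▸ hP0
          | succ j ihj =>
            exact hpres _ _ (ihj (Nat.le_of_succ_le hi))
              (hadj j (by omega))
        have hgm_ne : g m ≠ v₀ := by
          intro hEq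
          have := hinj m 0 le_rfl (by omega) (hEq.trans hg0.symm)
          omega
        obtain ⟨m', rfl⟩ : ∃ m', m = m' + 1 := ⟨m - 1, by omega⟩
        set k := m' + 1 with hk
        -- degree 2 at g k
        have hRk : R (g m') (g k) := hadj m' (by omega)
        rcases hdeg (g k) hgm_ne (hPg k le_rfl) with hemp | ⟨a, b, hab, hset⟩
        · exact absurd (Set.ext_iff.mp hemp (g m') |>.mp hRk) (by simp)
        have hm'mem : g m' ∈ ({a, b} : Set S) := hset ▸ hRk
        have hex : ∃ x, R x (g k) ∧ x ≠ g m' := by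
          rcases hm'mem with hEq | hEq
          · refine ⟨b, (Set.ext_iff.mp hset b).mpr (by simp), ?_⟩
            rw [hEq]; exact hab.symm
          · have hEq' : g m' = b := hEq
            refine ⟨a, (Set.ext_iff.mp hset a).mpr (by simp), ?_⟩
            rw [hEq']; exact hab
        have hspec := hnxt_spec (g m') (g k) hex
        rw [← hgstep m'] at hspec
        have hRnew : R (g (k + 1)) (g k) := hspec.1
        have hne : g (k + 1) ≠ g m' := hspec.2
        have hnewmem : g (k + 1) ∈ ({a, b} : Set S) := hset ▸ hRnew
        have hNk : {w : S | R w (g k)} = {g m', g (k + 1)} ∧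
            g m' ≠ g (k + 1) := by
          refine ⟨hset.trans (pair_lem a b _ _ hne.symm hm'mem hnewmem),
            hne.symm⟩
        -- injectivity extension
        have hnewinj : ∀ j, j ≤ k → g (k + 1) ≠ g j := by
          intro j hj hEq
          rcases Nat.eq_zero_or_pos j with rfl | hj0
          · -- g (k+1) = v₀ ; then g k ∈ nbrs v₀ = {u} = {g 1}
            have : g k ∈ {w : S | R w v₀} := by
              rw [← hg0, ← hEq]; exact hsymm _ _ hRnew
            rw [hu] at this
            have hk1 : g k = g 1 := by rw [this]; exact hg1.symm
            have h2 : k = 1 := hinj k 1 le_rfl (by omega) hk1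
            have hm0 : m' = 0 := by omega
            apply hne
            rw [hEq, hm0]
          · rcases Nat.lt_or_ge j k with hjk | hjk
            · -- 1 ≤ j < k : use nbr structure at j
              obtain ⟨j', rfl⟩ : ∃ j', j = j' + 1 := ⟨j - 1, by omega⟩
              have hN := hnbr j' (by omega)
              have : g k ∈ {w : S | R w (g (j' + 1))} := by
                rw [← hEq]; exact hsymm _ _ hRnew
              rw [hN.1] at this
              rcases this with hEq2 | hEq2
              · have := hinj k j' le_rfl (by omega) hEq2
                omega
              · have := hinj k (j' + 2) le_rfl (by omega) hEq2
                have : j' + 1 = m' := by omega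
                exact hne (hEq.trans (by rw [← this]))
            · -- j = k : irreflexivity
              have : j = k := le_antisymm hj hjk
              subst this
              exact hirr _ (hEq ▸ hRnew)
        refine ⟨?_, ?_, ?_⟩
        · intro i j hi hj hgij
          rcases Nat.lt_or_ge i (k + 1) with hik | hik <;>
            rcases Nat.lt_or_ge j (k + 1) with hjk | hjk
          · exact hinj i j (by omega) (by omega) hgij
          · have : j = k + 1 := by omega
            subst this
            exact absurd hgij.symm (hnewinj i (by omega))
          · have : i = k + 1 := by omega
            subst this
            exact absurd hgij (hnewinj j (by omega))
          · omega
        · intro i hi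
          rcases Nat.lt_or_ge i k with hik | hik
          · exact hadj i hik
          · have : i = k := by omega
            subst this
            exact hsymm _ _ hRnew
        · intro i hi
          rcases Nat.lt_or_ge (i + 1) k with hik | hik
          · exact hnbr i hik
          · have : i = m' := by omega
            subst this
            exact hNk
  constructor
  · intro ℓ hℓ
    refine ⟨fun i => g i.val, ?_, hg0, ?_⟩
    · intro i j hij
      exact Fin.ext ((key ℓ).1 i.val j.val (by omega) (by omega) hij)
    · intro i
      exact (key ℓ).2.1 i.val i.isLt
  · exact Infinite.of_injective g (fun i j hij =>
      (key (max i j)).1 i j (le_max_left _ _) (le_max_right _ _) hij)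
end
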